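/- arXiv:2206.11081 — 3 statements merged into one kernel-verified Lean document; each statement's English description precedes it below -/
import Mathlib

section
/- Let S be a finite set of node types with the heterogeneous setup, let λ > 0, and let ℓ be the heterogeneous energy. Then the matrix I + λ(Q − P + D_blk) is invertible, ℓ has a unique global minimizer Y* = (Y*_s)_{s∈S}, and vec(Y*) = (I + λ(Q − P + D_blk))^{-1} vec(B), where vec(B) concatenates vec(B_s) over s ∈ S. (Lemma 3.1) -/
open Matrix Kronecker BigOperators

/-- **Heterogeneous setup.**  `S` is a finite set of node types; each `s : S` has `n s`
nodes and feature dimension `d s ≥ 1`.  For each ordered pair of node types `(s, s')`,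
`T s s'` is the (finite) set of edge types connecting them; each `t : T s s'` carries a
0/1 adjacency matrix `A t ∈ ℝ^{n s × n s'}` and a compatibility matrix
`H t ∈ ℝ^{d s × d s'}`.  The edge types are closed under inversion: `einv t : T s' s`
satisfies `einv (einv t) = t` and `A (einv t) = (A t)ᵀ`. -/
structure HeteroSetup where
  S : Type
  [fintypeS : Fintype S]
  [decEqS : DecidableEq S]
  n : S → ℕ
  d : S → ℕ
  d_pos : ∀ s, 1 ≤ d s
  T : S → S → Type
  [fintypeT : ∀ s s', Fintype (T s s')]
  A : ∀ {s s' : S}, T s s' → Matrix (Fin (n s)) (Fin (n s')) ℝ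
  H : ∀ {s s' : S}, T s s' → Matrix (Fin (d s)) (Fin (d s')) ℝ
  einv : ∀ {s s' : S}, T s s' → T s' s
  einv_einv : ∀ {s s' : S} (t : T s s'), einv (einv t) = t
  A_einv : ∀ {s s' : S} (t : T s s'), A (einv t) = (A t)ᵀ
  A_zero_one : ∀ {s s' : S} (t : T s s') (i : Fin (n s)) (j : Fin (n s')),
    A t i j = 0 ∨ A t i j = 1

attribute [instance] HeteroSetup.fintypeS HeteroSetup.decEqS HeteroSetup.fintypeT

namespace HeteroSetup

variable (hg : HeteroSetup)

/-- The space of node embeddings `Y = (Y_s)_{s ∈ S}`, `Y_s ∈ ℝ^{n_s × d_s}`. -/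
abbrev Emb := ∀ s : hg.S, Matrix (Fin (hg.n s)) (Fin (hg.d s)) ℝ

/-- The type-`t` degree matrix `D_{st}` of type-`s` nodes: the diagonal matrix of the
row sums of `A t` for `t ∈ T_{ss'}`. -/
noncomputable def Dst {s s' : hg.S} (t : hg.T s s') : Matrix (Fin (hg.n s)) (Fin (hg.n s)) ℝ :=
  Matrix.diagonal fun i => ∑ j, hg.A t i j

/-- `D_s = Σ_{s'∈S} Σ_{t∈T_{ss'}} D_{st}`. -/
noncomputable def Dtot (s : hg.S) : Matrix (Fin (hg.n s)) (Fin (hg.n s)) ℝ :=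
  ∑ s' : hg.S, ∑ t : hg.T s s', hg.Dst t

/-- The heterogeneous energy
`ℓ(Y) = Σ_s [ (1/2)‖Y_s − B_s‖_F² + (λ/2) Σ_{s'} Σ_{t ∈ T_{ss'}} Σ_{(i,j) : (A_t)_{ij} = 1}
‖(Y_s)_{i,:} H_t − (Y_{s'})_{j,:}‖² ]`.  Since the entries of `A t` are 0 or 1, the sum
over the edges `(i,j)` with `(A_t)_{ij} = 1` is written with the weight `A t i j`. -/
noncomputable def energy (lam : ℝ) (B : hg.Emb) (Y : hg.Emb) : ℝ :=
  ∑ s : hg.S,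
    ((1 / 2 : ℝ) * ∑ i, ∑ k, (Y s i k - B s i k) ^ 2 +
      lam / 2 * ∑ s' : hg.S, ∑ t : hg.T s s', ∑ i, ∑ j,
        hg.A t i j * ∑ k', ((Y s i ᵥ* hg.H t) k' - Y s' j k') ^ 2)

/-- The global index set for the stacked column-vectorization `vec(Y)`: node type `s`,
column (feature) index `k : Fin (d s)`, row (node) index `i : Fin (n s)`. -/
abbrev Idx := Σ s : hg.S, Fin (hg.d s) × Fin (hg.n s)

/-- The stacked column-vectorization `vec(Y)`, concatenating `vec(Y_s)` over `s ∈ S`: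
`vec(Y)⟨s, (k, i)⟩ = (Y_s)_{ik}`. -/
noncomputable def vecOf (Y : hg.Emb) : hg.Idx → ℝ := fun x => Y x.1 x.2.2 x.2.1

/-- The block matrix `P` with blocks `P_{ss'} = Σ_{t∈T_{ss'}} (H_t + H_{t_inv}ᵀ) ⊗ A_t`
(entrywise: the `((k,i),(k',j))` entry of the `(s,s')` block is
`(H_t + H_{t_inv}ᵀ)_{k k'} (A_t)_{i j}`). -/
noncomputable def Pmat : Matrix hg.Idx hg.Idx ℝ := fun x y =>
  ∑ t : hg.T x.1 y.1, (hg.H t + (hg.H (hg.einv t))ᵀ) x.2.1 y.2.1 * hg.A t x.2.2 y.2.2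

/-- The block-diagonal matrix `Q` with diagonal blocks
`Q_s = Σ_{s'∈S} Σ_{t∈T_{ss'}} (H_t H_tᵀ ⊗ D_{st})`. -/
noncomputable def Qmat : Matrix hg.Idx hg.Idx ℝ :=
  Matrix.blockDiagonal' fun s => ∑ s' : hg.S, ∑ t : hg.T s s',
    (hg.H t * (hg.H t)ᵀ) ⊗ₖ hg.Dst t

/-- The block-diagonal matrix `D_blk` with diagonal blocks `I_{d_s} ⊗ D_s`. -/
noncomputable def Dblk : Matrix hg.Idx hg.Idx ℝ :=
  Matrix.blockDiagonal' fun s => (1 : Matrix (Fin (hg.d s)) (Fin (hg.d s)) ℝ) ⊗ₖ hg.Dtot s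

end HeteroSetup

/-!
Vectorising with `vec (A * X * Bᵀ) = (B ⊗ₖ A) *ᵥ vec X` and expanding each edge term
`‖(Y_s)_i H_t − (Y_{s'})_j‖²` writes the energy as `½‖y − b‖² + (λ/2) yᵀ M y`, with
`y = vec Y`, `b = vec B` and `M = Q − P + D_blk`: the cross terms of `t` and of `t_inv` add up to
`P`, and reindexing the squared endpoint terms by inversion gives `D_blk`. Since the energy is
nonnegative, `M` is positive semidefinite, so `N = 1 + λ M` is positive definite, and completing
the square, `2ℓ(Y) = (y − N⁻¹b)ᵀ N (y − N⁻¹b) + const`, shows that `N⁻¹ b` is the unique minimizer.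
-/

namespace Matrix

variable {R : Type*} [CommRing R] {m n d e : Type*}

theorem kronecker_sum {ι : Type*} (s : Finset ι) (A : Matrix d e R) (B : ι → Matrix m n R) :
    A ⊗ₖ ∑ i ∈ s, B i = ∑ i ∈ s, A ⊗ₖ B i :=
  map_sum (kroneckerBilinear (R := R) A) B s

variable [Fintype m] [Fintype n] [Fintype d] [Fintype e]

theorem vec_dotProduct_kronecker_mulVec_vec (X : Matrix m d R) (G : Matrix d e R)
    (A : Matrix m n R) (Z : Matrix n e R) :
    vec X ⬝ᵥ (G ⊗ₖ A) *ᵥ vec Z = ∑ i, ∑ j, A i j * (X i ᵥ* G) ⬝ᵥ Z j := by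
  calc vec X ⬝ᵥ (G ⊗ₖ A) *ᵥ vec Z = trace (Xᵀ * (A * Z * Gᵀ)) := by
        rw [kronecker_mulVec_vec, vec_dotProduct_vec]
    _ = trace (A * (X * G * Zᵀ)ᵀ) := by
        rw [trace_mul_comm]; simp only [transpose_mul, transpose_transpose, Matrix.mul_assoc]
    _ = ∑ i, ∑ j, A i j * (X i ᵥ* G) ⬝ᵥ Z j := by
        simp only [trace, diag, mul_apply, transpose_apply, vecMul, dotProduct]

theorem vec_dotProduct_kronecker_diagonal_mulVec_vec [DecidableEq m] (X : Matrix m d R)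
    (G : Matrix d d R) (r : m → R) :
    vec X ⬝ᵥ (G ⊗ₖ diagonal r) *ᵥ vec X = ∑ i, r i * (X i ᵥ* G) ⬝ᵥ X i := by
  simp [vec_dotProduct_kronecker_mulVec_vec, diagonal_apply]

theorem vecMul_mul_transpose_dotProduct (x : d → R) (H : Matrix d e R) :
    x ᵥ* (H * Hᵀ) ⬝ᵥ x = (x ᵥ* H) ⬝ᵥ (x ᵥ* H) := by
  rw [← vecMul_vecMul, vecMul_transpose, dotProduct_comm, dotProduct_mulVec]

theorem sum_mul_dotProduct_sub_self (A : Matrix m n R) (u : m → e → R) (w : n → e → R) :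
    ∑ i, ∑ j, A i j * (u i - w j) ⬝ᵥ (u i - w j)
      = ∑ i, (∑ j, A i j) * u i ⬝ᵥ u i - 2 * ∑ i, ∑ j, A i j * u i ⬝ᵥ w j
        + ∑ j, (∑ i, A i j) * w j ⬝ᵥ w j := by
  have expand : ∀ i j, A i j * (u i - w j) ⬝ᵥ (u i - w j)
      = A i j * u i ⬝ᵥ u i - 2 * (A i j * u i ⬝ᵥ w j) + A i j * w j ⬝ᵥ w j := by
    intro i j
    simp only [sub_dotProduct, dotProduct_sub, dotProduct_comm (w j) (u i)]
    ring
  simp only [expand, Finset.sum_add_distrib, Finset.sum_sub_distrib, Finset.sum_mul,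
    Finset.mul_sum]
  rw [Finset.sum_comm (f := fun i j => A i j * w j ⬝ᵥ w j)]

theorem sum_mul_sum_vecMul_sub_sq (X : Matrix m d R) (H : Matrix d e R) (A : Matrix m n R)
    (Z : Matrix n e R) [DecidableEq m] [DecidableEq n] [DecidableEq e] :
    ∑ i, ∑ j, A i j * ∑ k, ((X i ᵥ* H) k - Z j k) ^ 2
      = vec X ⬝ᵥ ((H * Hᵀ) ⊗ₖ diagonal fun i => ∑ j, A i j) *ᵥ vec X
        - 2 * vec X ⬝ᵥ (H ⊗ₖ A) *ᵥ vec Z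
        + vec Z ⬝ᵥ ((1 : Matrix e e R) ⊗ₖ diagonal fun j => ∑ i, A i j) *ᵥ vec Z := by
  rw [vec_dotProduct_kronecker_diagonal_mulVec_vec, vec_dotProduct_kronecker_diagonal_mulVec_vec,
    vec_dotProduct_kronecker_mulVec_vec]
  simp only [vecMul_mul_transpose_dotProduct, vecMul_one]
  rw [← sum_mul_dotProduct_sub_self A (fun i => X i ᵥ* H) Z]
  simp only [dotProduct, Pi.sub_apply, sq]

variable {ι : Type*} [Fintype ι] {κ : ι → Type*} [∀ i, Fintype (κ i)]

theorem dotProduct_mulVec_sigma (M : Matrix (Σ i, κ i) (Σ i, κ i) R) (v w : (Σ i, κ i) → R) :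
    v ⬝ᵥ M *ᵥ w = ∑ i, ∑ j, (fun p => v ⟨i, p⟩) ⬝ᵥ
      (of fun p q => M ⟨i, p⟩ ⟨j, q⟩) *ᵥ fun q => w ⟨j, q⟩ := by
  simp only [dotProduct, mulVec, Fintype.sum_sigma, of_apply, Finset.mul_sum]
  exact Finset.sum_congr rfl fun i _ => Finset.sum_comm

theorem dotProduct_blockDiagonal'_mulVec [DecidableEq ι] (G : ∀ i, Matrix (κ i) (κ i) R)
    (v w : (Σ i, κ i) → R) :
    v ⬝ᵥ blockDiagonal' G *ᵥ w = ∑ i, (fun p => v ⟨i, p⟩) ⬝ᵥ G i *ᵥ fun q => w ⟨i, q⟩ := by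
  rw [dotProduct_mulVec_sigma]
  refine Finset.sum_congr rfl fun i _ => (Finset.sum_eq_single i ?_ (by simp)).trans ?_
  · intro j _ hji
    simp [dotProduct, mulVec, blockDiagonal'_apply_ne G _ _ hji.symm]
  · simp only [blockDiagonal'_apply_eq]
    rfl

theorem dotProduct_mulVec_sub_two_mul_eq {R : Type*} [CommRing R] {N : Matrix ι ι R}
    (hN : Nᵀ = N) {b u : ι → R} (hu : N *ᵥ u = b) (v : ι → R) :
    v ⬝ᵥ N *ᵥ v - 2 * b ⬝ᵥ v = (v - u) ⬝ᵥ N *ᵥ (v - u) - u ⬝ᵥ N *ᵥ u := by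
  have hsymm : u ⬝ᵥ N *ᵥ v = b ⬝ᵥ v := by
    rw [dotProduct_mulVec, ← mulVec_transpose, hN, hu, dotProduct_comm]
  simp only [mulVec_sub, sub_dotProduct, dotProduct_sub, hsymm, hu, dotProduct_comm v b]
  ring

theorem PosDef.forall_quadratic_le_iff [DecidableEq ι] {N : Matrix ι ι ℝ} (hN : N.PosDef)
    (b v : ι → ℝ) :
    (∀ w, v ⬝ᵥ N *ᵥ v - 2 * b ⬝ᵥ v ≤ w ⬝ᵥ N *ᵥ w - 2 * b ⬝ᵥ w) ↔ v = N⁻¹ *ᵥ b := by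
  have hNt : Nᵀ = N := by simpa using hN.isHermitian.eq
  have hu : N *ᵥ (N⁻¹ *ᵥ b) = b := by
    rw [mulVec_mulVec, mul_nonsing_inv _ ((isUnit_iff_isUnit_det N).mp hN.isUnit), one_mulVec]
  simp only [dotProduct_mulVec_sub_two_mul_eq hNt hu, sub_le_sub_iff_right]
  constructor
  · intro hmin
    by_contra hne
    have hpos := hN.dotProduct_mulVec_pos (sub_ne_zero.mpr hne)
    simp only [star_trivial] at hpos
    have := hmin (N⁻¹ *ᵥ b)
    simp only [sub_self, zero_dotProduct] at this
    linarith
  · rintro rfl w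
    simpa using hN.posSemidef.dotProduct_mulVec_nonneg (w - N⁻¹ *ᵥ b)

end Matrix

namespace HeteroSetup

open Matrix

variable (hg : HeteroSetup)

noncomputable def vecEquiv : hg.Emb ≃ (hg.Idx → ℝ) where
  toFun := hg.vecOf
  invFun v s i k := v ⟨s, (k, i)⟩
  left_inv _ := rfl
  right_inv _ := rfl

lemma vecOf_sigma_mk (Y : hg.Emb) (s : hg.S) :
    (fun p => hg.vecOf Y ⟨s, p⟩) = vec (Y s) :=
  rfl

lemma A_nonneg {s s' : hg.S} (t : hg.T s s') (i : Fin (hg.n s)) (j : Fin (hg.n s')) :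
    0 ≤ hg.A t i j := by
  rcases hg.A_zero_one t i j with h | h <;> simp [h]

lemma sum_sum_sum_einv {M : Type*} [AddCommMonoid M] (f : ∀ s s', hg.T s s' → M) :
    ∑ s, ∑ s', ∑ t : hg.T s s', f s s' t = ∑ s, ∑ s', ∑ t : hg.T s s', f s' s (hg.einv t) := by
  rw [Finset.sum_comm]
  refine Finset.sum_congr rfl fun s _ => Finset.sum_congr rfl fun s' _ => ?_
  exact Fintype.sum_equiv ⟨hg.einv, hg.einv, hg.einv_einv, hg.einv_einv⟩ _ _ fun t => by
    simp [hg.einv_einv]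

lemma vecOf_dotProduct_Qmat_mulVec (Y : hg.Emb) :
    hg.vecOf Y ⬝ᵥ hg.Qmat *ᵥ hg.vecOf Y
      = ∑ s, ∑ s', ∑ t : hg.T s s',
          vec (Y s) ⬝ᵥ ((hg.H t * (hg.H t)ᵀ) ⊗ₖ hg.Dst t) *ᵥ vec (Y s) := by
  simp only [Qmat, dotProduct_blockDiagonal'_mulVec, vecOf_sigma_mk, sum_mulVec, dotProduct_sum]

lemma vecOf_dotProduct_Dblk_mulVec (Y : hg.Emb) :
    hg.vecOf Y ⬝ᵥ hg.Dblk *ᵥ hg.vecOf Y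
      = ∑ s, ∑ s', ∑ t : hg.T s s',
          vec (Y s') ⬝ᵥ ((1 : Matrix (Fin (hg.d s')) _ ℝ) ⊗ₖ hg.Dst (hg.einv t)) *ᵥ vec (Y s') := by
  rw [hg.sum_sum_sum_einv (fun s s' t =>
    vec (Y s') ⬝ᵥ ((1 : Matrix (Fin (hg.d s')) _ ℝ) ⊗ₖ hg.Dst (hg.einv t)) *ᵥ vec (Y s'))]
  simp only [hg.einv_einv, Dblk, Dtot, dotProduct_blockDiagonal'_mulVec, vecOf_sigma_mk,
    kronecker_sum, sum_mulVec, dotProduct_sum]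

lemma vecOf_dotProduct_Pmat_mulVec (Y : hg.Emb) :
    hg.vecOf Y ⬝ᵥ hg.Pmat *ᵥ hg.vecOf Y
      = 2 * ∑ s, ∑ s', ∑ t : hg.T s s', vec (Y s) ⬝ᵥ (hg.H t ⊗ₖ hg.A t) *ᵥ vec (Y s') := by
  have block : ∀ s s', (of fun p q => hg.Pmat ⟨s, p⟩ ⟨s', q⟩)
      = ∑ t : hg.T s s', (hg.H t ⊗ₖ hg.A t + (hg.H (hg.einv t))ᵀ ⊗ₖ hg.A t) := by
    intro s s'
    ext p q
    simp [Pmat, Matrix.sum_apply, add_mul]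
  have swap : ∀ s s' (t : hg.T s s'),
      vec (Y s) ⬝ᵥ ((hg.H (hg.einv t))ᵀ ⊗ₖ hg.A t) *ᵥ vec (Y s')
        = vec (Y s') ⬝ᵥ (hg.H (hg.einv t) ⊗ₖ hg.A (hg.einv t)) *ᵥ vec (Y s) := by
    intro s s' t
    rw [← hg.einv_einv t, hg.A_einv, hg.einv_einv, kroneckerMap_transpose, dotProduct_mulVec,
      vecMul_transpose, dotProduct_comm]
  rw [dotProduct_mulVec_sigma]
  simp only [block, vecOf_sigma_mk, sum_mulVec, add_mulVec, dotProduct_sum, dotProduct_add,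
    Finset.sum_add_distrib, swap]
  rw [← hg.sum_sum_sum_einv (fun s s' t => vec (Y s) ⬝ᵥ (hg.H t ⊗ₖ hg.A t) *ᵥ vec (Y s'))]
  ring

lemma energy_eq (lam : ℝ) (B Y : hg.Emb) :
    hg.energy lam B Y
      = 1 / 2 * ((hg.vecOf Y - hg.vecOf B) ⬝ᵥ (hg.vecOf Y - hg.vecOf B))
        + lam / 2 * (hg.vecOf Y ⬝ᵥ (hg.Qmat - hg.Pmat + hg.Dblk) *ᵥ hg.vecOf Y) := by
  have frobenius : ∑ s, ∑ i, ∑ k, (Y s i k - B s i k) ^ 2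
      = (hg.vecOf Y - hg.vecOf B) ⬝ᵥ (hg.vecOf Y - hg.vecOf B) := by
    simp only [dotProduct, Fintype.sum_sigma, Fintype.sum_prod_type, Pi.sub_apply, vecOf, sq]
    exact Finset.sum_congr rfl fun s _ => Finset.sum_comm
  have edges : ∑ s, ∑ s', ∑ t : hg.T s s', ∑ i, ∑ j,
        hg.A t i j * ∑ k', ((Y s i ᵥ* hg.H t) k' - Y s' j k') ^ 2
      = hg.vecOf Y ⬝ᵥ (hg.Qmat - hg.Pmat + hg.Dblk) *ᵥ hg.vecOf Y := by
    simp only [sum_mul_sum_vecMul_sub_sq, Finset.sum_add_distrib, Finset.sum_sub_distrib,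
      ← Finset.mul_sum]
    simp only [sub_mulVec, add_mulVec, dotProduct_add, dotProduct_sub,
      vecOf_dotProduct_Qmat_mulVec, vecOf_dotProduct_Pmat_mulVec, vecOf_dotProduct_Dblk_mulVec,
      Dst, A_einv, transpose_apply]
  rw [energy, Finset.sum_add_distrib, ← Finset.mul_sum, ← Finset.mul_sum, frobenius, edges]

lemma Pmat_transpose : hg.Pmatᵀ = hg.Pmat := by
  ext ⟨s, k, i⟩ ⟨s', k', j⟩
  refine Fintype.sum_equiv ⟨hg.einv, hg.einv, hg.einv_einv, hg.einv_einv⟩ _ _ fun t => ?_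
  simp only [Equiv.coe_fn_mk, Matrix.add_apply, transpose_apply, hg.einv_einv, hg.A_einv]
  ring

lemma Qmat_transpose : hg.Qmatᵀ = hg.Qmat := by
  simp only [Qmat, blockDiagonal'_transpose, transpose_sum, ← kroneckerMap_transpose,
    transpose_mul, transpose_transpose, Dst, diagonal_transpose]

lemma Dblk_transpose : hg.Dblkᵀ = hg.Dblk := by
  simp only [Dblk, Dtot, Dst, blockDiagonal'_transpose, transpose_sum, ← kroneckerMap_transpose,
    transpose_one, diagonal_transpose]

lemma energy_nonneg {lam : ℝ} (hlam : 0 ≤ lam) (B Y : hg.Emb) : 0 ≤ hg.energy lam B Y :=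
  Finset.sum_nonneg fun _ _ => add_nonneg (by positivity) <| mul_nonneg (by positivity) <|
    Finset.sum_nonneg fun _ _ => Finset.sum_nonneg fun t _ => Finset.sum_nonneg fun i _ =>
      Finset.sum_nonneg fun j _ => mul_nonneg (hg.A_nonneg t i j) (by positivity)

lemma posSemidef_Qmat_sub_Pmat_add_Dblk : (hg.Qmat - hg.Pmat + hg.Dblk).PosSemidef := by
  refine PosSemidef.of_dotProduct_mulVec_nonneg ?_ fun v => ?_
  · rw [IsHermitian, conjTranspose_eq_transpose_of_trivial, transpose_add, transpose_sub,
      hg.Qmat_transpose, hg.Pmat_transpose, hg.Dblk_transpose]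
  · -- with `B = Y` and `λ = 1` the energy is `½ vᵀ M v`
    have h := hg.energy_eq 1 (hg.vecEquiv.symm v) (hg.vecEquiv.symm v)
    have h0 := hg.energy_nonneg zero_le_one (hg.vecEquiv.symm v) (hg.vecEquiv.symm v)
    change _ = _ * ((v - v) ⬝ᵥ (v - v)) + _ * (v ⬝ᵥ _ *ᵥ v) at h
    simp only [sub_self, dotProduct_zero, mul_zero, zero_add] at h
    rw [star_trivial]
    linarith

lemma posDef_one_add_smul {lam : ℝ} (hlam : 0 < lam) :
    (1 + lam • (hg.Qmat - hg.Pmat + hg.Dblk)).PosDef :=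
  PosDef.one.add_posSemidef (hg.posSemidef_Qmat_sub_Pmat_add_Dblk.smul hlam.le)

lemma two_mul_energy (lam : ℝ) (B Y : hg.Emb) :
    2 * hg.energy lam B Y
      = hg.vecOf Y ⬝ᵥ (1 + lam • (hg.Qmat - hg.Pmat + hg.Dblk)) *ᵥ hg.vecOf Y
        - 2 * hg.vecOf B ⬝ᵥ hg.vecOf Y + hg.vecOf B ⬝ᵥ hg.vecOf B := by
  rw [energy_eq]
  simp only [add_mulVec, one_mulVec, smul_mulVec, dotProduct_add, dotProduct_smul,
    sub_dotProduct, dotProduct_sub, smul_eq_mul, dotProduct_comm (hg.vecOf Y) (hg.vecOf B)]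
  ring

lemma isMinimizer_energy_iff {lam : ℝ} (hlam : 0 < lam) (B Ystar : hg.Emb) :
    (∀ Y, hg.energy lam B Ystar ≤ hg.energy lam B Y)
      ↔ hg.vecOf Ystar = (1 + lam • (hg.Qmat - hg.Pmat + hg.Dblk))⁻¹ *ᵥ hg.vecOf B := by
  rw [← (hg.posDef_one_add_smul hlam).forall_quadratic_le_iff, ← hg.vecEquiv.forall_congr_right]
  refine forall_congr' fun Y => ?_
  rw [← mul_le_mul_iff_right₀ two_pos, two_mul_energy, two_mul_energy, add_le_add_iff_right]
  rfl

end HeteroSetup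

open Matrix HeteroSetup

/-- **Lemma 3.1.**  In the heterogeneous setup with λ > 0, the matrix
`I + λ(Q − P + D_blk)` is invertible, the heterogeneous energy ℓ has a unique global
minimizer `Y*`, and `vec(Y*) = (I + λ(Q − P + D_blk))⁻¹ vec(B)`. -/
theorem stmt0 (hg : HeteroSetup) (lam : ℝ) (hlam : 0 < lam) (B : hg.Emb) :
    IsUnit (1 + lam • (hg.Qmat - hg.Pmat + hg.Dblk)) ∧
    (∃! Ystar : hg.Emb, ∀ Y : hg.Emb, hg.energy lam B Ystar ≤ hg.energy lam B Y) ∧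
    (∀ Ystar : hg.Emb, (∀ Y : hg.Emb, hg.energy lam B Ystar ≤ hg.energy lam B Y) →
      hg.vecOf Ystar = (1 + lam • (hg.Qmat - hg.Pmat + hg.Dblk))⁻¹ *ᵥ hg.vecOf B) := by
  have hmin := hg.isMinimizer_energy_iff hlam B
  refine ⟨(hg.posDef_one_add_smul hlam).isUnit, ⟨hg.vecEquiv.symm _, (hmin _).mpr rfl,
    fun Y hY => hg.vecEquiv.eq_symm_apply.mpr ((hmin Y).mp hY)⟩, fun Y => (hmin Y).mp⟩
end

section
/- In the heterogeneous setup with λ > 0, for every Y = (Y_s)_{s∈S} and every s ∈ S, the gradient of the heterogeneous energy ℓ with respect to Y_s is ∇_{Y_s} ℓ(Y) = (I + λ D_s) Y_s − B_s + λ Σ_{s'∈S} Σ_{t∈T_{ss'}} ( D_{st} Y_s (H_t H_tᵀ) − A_t Y_{s'} (H_tᵀ + H_{t_inv}) ). -/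
open Matrix Kronecker BigOperators

open Matrix HeteroSetup

/-!
The energy is a quadratic polynomial: `ℓ(Y + W) = ℓ(Y) + δℓ(Y; W) + ℓ₀(W)`, where `ℓ₀` is the
energy with `B = 0`. Being continuous and homogeneous of degree two, `ℓ₀(W)` is `O(‖W‖²)`, so the
gradient is read off the linear term `δℓ(Y; W)` for `W` supported on the block `s`. Edges
leaving `s` contribute `D_{st} Y_s H_t H_tᵀ − A_t Y_{s'} H_tᵀ`; edges entering `s`, reindexed
through `t ↦ t_inv`, contribute `D_{st} Y_s − A_t Y_{s'} H_{t_inv}`.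
-/

open Finset Asymptotics Topology

section Gradient

variable {E : Type*} [NormedAddCommGroup E]

lemma isBigO_norm_sq_of_continuousAt_of_smul [NormedSpace ℝ E] {q : E → ℝ}
    (hq : ContinuousAt q 0) (hsmul : ∀ (c : ℝ) (v : E), q (c • v) = c ^ 2 * q v) :
    q =O[𝓝 0] fun v => ‖v‖ ^ 2 := by
  have hq0 : q 0 = 0 := by simpa using hsmul 0 0
  obtain ⟨δ, hδ, hball⟩ := Metric.continuousAt_iff.mp hq 1 one_pos
  refine IsBigO.of_bound ((2 / δ) ^ 2) (Filter.Eventually.of_forall fun v => ?_)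
  rcases eq_or_ne v 0 with rfl | hv
  · simp [hq0]
  have hv' : 0 < ‖v‖ := norm_pos_iff.mpr hv
  -- rescale `v` into the ball of radius `δ` where `|q| < 1`
  set c := δ / (2 * ‖v‖)
  have hcv : ‖c • v‖ < δ := by
    have : c * ‖v‖ = δ / 2 := by simp only [c]; field_simp
    rw [norm_smul, Real.norm_of_nonneg (by positivity), this]
    linarith
  have hbound := hball (by simpa [dist_eq_norm] using hcv)
  rw [dist_eq_norm, hq0, sub_zero, hsmul, Real.norm_eq_abs, abs_mul, abs_sq] at hbound
  have hconst : (2 / δ) ^ 2 * ‖v‖ ^ 2 = 1 / c ^ 2 := by simp only [c]; field_simp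
  rw [Real.norm_eq_abs, norm_pow, norm_norm, hconst, le_div_iff₀ (by positivity)]
  nlinarith [abs_nonneg (q v)]

lemma hasGradientAt_of_eq_add_inner_add [InnerProductSpace ℝ E] [CompleteSpace E]
    {f q : E → ℝ} {g x : E} (hf : ∀ v, f (x + v) = f x + inner ℝ g v + q v)
    (hq : q =O[𝓝 0] fun v => ‖v‖ ^ 2) : HasGradientAt f g x := by
  rw [hasGradientAt_iff_isLittleO_nhds_zero]
  have hrem : (fun v => f (x + v) - f x - inner ℝ g v) = q := funext fun v => by rw [hf]; ring
  rw [hrem]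
  exact hq.trans_isLittleO (isLittleO_norm_pow_id one_lt_two)

end Gradient

section Frobenius

variable {I J K : Type*} [Fintype I] [Fintype J] [Fintype K]

lemma trace_mul_transpose_eq_sum (M N : Matrix I K ℝ) :
    trace (M * Nᵀ) = ∑ i, ∑ k, M i k * N i k := by
  simp [Matrix.trace, Matrix.mul_apply]

lemma inner_toLp_eq_trace (M : Matrix I K ℝ) (V : EuclideanSpace ℝ (I × K)) :
    inner ℝ ((WithLp.equiv 2 _).symm fun p : I × K => M p.1 p.2) V =
      trace (M * (Matrix.of fun i k => V (i, k))ᵀ) := by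
  rw [trace_mul_transpose_eq_sum, PiLp.inner_apply, Fintype.sum_prod_type]
  simp [mul_comm]

lemma sum_mul_sum_sub_mul_left [DecidableEq I] (A : Matrix I J ℝ) (M : Matrix I K ℝ)
    (N : Matrix J K ℝ) (X : Matrix I K ℝ) :
    ∑ i, ∑ j, A i j * ∑ k, (M i k - N j k) * X i k =
      trace ((diagonal (fun i => ∑ j, A i j) * M - A * N) * Xᵀ) := by
  simp only [trace_mul_transpose_eq_sum, Matrix.sub_apply, diagonal_mul]
  simp only [Matrix.mul_apply, sub_mul, mul_sub, sum_sub_distrib, mul_sum, sum_mul]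
  congr 1 <;>
    exact sum_congr rfl fun i _ => sum_comm.trans
      (sum_congr rfl fun _ _ => sum_congr rfl fun _ _ => by ring)

lemma sum_mul_sum_sub_mul_right [DecidableEq J] (A : Matrix I J ℝ) (M : Matrix I K ℝ)
    (N : Matrix J K ℝ) (X : Matrix J K ℝ) :
    ∑ i, ∑ j, A i j * ∑ k, (M i k - N j k) * X j k =
      trace ((Aᵀ * M - diagonal (fun j => ∑ i, A i j) * N) * Xᵀ) := by
  have h := sum_mul_sum_sub_mul_left Aᵀ N M X
  simp only [transpose_apply] at h
  rw [← neg_sub, Matrix.neg_mul, trace_neg, ← h, sum_comm, ← sum_neg_distrib]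
  refine sum_congr rfl fun j _ => ?_
  rw [← sum_neg_distrib]
  refine sum_congr rfl fun i _ => ?_
  rw [← mul_neg, ← sum_neg_distrib]
  exact congrArg _ (sum_congr rfl fun k _ => by ring)

end Frobenius

namespace HeteroSetup

variable (hg : HeteroSetup)

def einvEquiv (s s' : hg.S) : hg.T s s' ≃ hg.T s' s :=
  ⟨hg.einv, hg.einv, hg.einv_einv, hg.einv_einv⟩

section Energy

variable (lam : ℝ) (B : hg.Emb)

noncomputable def energyDeriv (Y W : hg.Emb) : ℝ :=
  ∑ s, (∑ i, ∑ k, (Y s i k - B s i k) * W s i k +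
    lam * ∑ s', ∑ t : hg.T s s', ∑ i, ∑ j, hg.A t i j *
      ∑ k', ((Y s i ᵥ* hg.H t) k' - Y s' j k') * ((W s i ᵥ* hg.H t) k' - W s' j k'))

lemma energy_add (Y W : hg.Emb) :
    hg.energy lam B (Y + W) =
      hg.energy lam B Y + hg.energyDeriv lam B Y W + hg.energy lam 0 W := by
  have hsq : ∀ a b c d : ℝ,
      (a + b - (c + d)) ^ 2 = (a - c) ^ 2 + 2 * ((a - c) * (b - d)) + (b - d) ^ 2 :=
    fun a b c d => by ring
  have hsq' : ∀ a b c : ℝ, (a + b - c) ^ 2 = (a - c) ^ 2 + 2 * ((a - c) * b) + b ^ 2 :=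
    fun a b c => by ring
  have h2 : ∀ a x : ℝ, a * (2 * x) = 2 * (a * x) := fun a x => mul_left_comm a 2 x
  simp only [energy, energyDeriv, ← mul_apply_eq_vecMul, Pi.add_apply, Matrix.add_mul,
    Matrix.add_apply, Pi.zero_apply, Matrix.zero_apply, sub_zero, hsq, hsq', sum_add_distrib,
    mul_add, h2, ← mul_sum]
  ring

lemma energy_zero_smul (c : ℝ) (W : hg.Emb) :
    hg.energy lam 0 (c • W) = c ^ 2 * hg.energy lam 0 W := by
  have hc : ∀ a x : ℝ, a * (c ^ 2 * x) = c ^ 2 * (a * x) := fun a x => mul_left_comm a _ x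
  simp only [energy, ← mul_apply_eq_vecMul, Pi.smul_apply, Matrix.smul_mul, Matrix.smul_apply,
    Pi.zero_apply, Matrix.zero_apply, sub_zero, smul_eq_mul, ← mul_sub, mul_pow, hc, ← mul_sum]
  rw [mul_sum]
  exact sum_congr rfl fun _ _ => by ring

lemma continuous_energy : Continuous (hg.energy lam B) := by
  unfold energy
  fun_prop

variable (Y : hg.Emb) (s : hg.S) (X : Matrix (Fin (hg.n s)) (Fin (hg.d s)) ℝ)

lemma sum_out_edges :
    ∑ s', ∑ t : hg.T s s', ∑ i, ∑ j, hg.A t i j *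
        ∑ k', ((Y s i ᵥ* hg.H t) k' - Y s' j k') * (X i ᵥ* hg.H t) k' =
      ∑ s', ∑ t : hg.T s s',
        trace ((hg.Dst t * Y s * (hg.H t * (hg.H t)ᵀ) - hg.A t * Y s' * (hg.H t)ᵀ) * Xᵀ) := by
  refine sum_congr rfl fun s' _ => sum_congr rfl fun t _ => ?_
  simp only [← mul_apply_eq_vecMul]
  rw [sum_mul_sum_sub_mul_left, transpose_mul, ← Matrix.mul_assoc, Matrix.sub_mul]
  simp only [Dst, Matrix.mul_assoc]

lemma sum_in_edges :
    ∑ s', ∑ t : hg.T s' s, ∑ i, ∑ j, hg.A t i j *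
        ∑ k', ((Y s' i ᵥ* hg.H t) k' - Y s j k') * X j k' =
      ∑ s', ∑ t : hg.T s s',
        trace ((hg.A t * Y s' * hg.H (hg.einv t) - hg.Dst t * Y s) * Xᵀ) := by
  refine sum_congr rfl fun s' _ => ?_
  rw [← (hg.einvEquiv s s').sum_comp]
  refine sum_congr rfl fun t _ => ?_
  simp only [← mul_apply_eq_vecMul]
  rw [sum_mul_sum_sub_mul_right]
  simp only [einvEquiv, Equiv.coe_fn_mk, A_einv, transpose_transpose, transpose_apply, Dst,
    Matrix.mul_assoc]

lemma energyDeriv_single :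
    hg.energyDeriv lam B Y (Pi.single s X) =
      trace (((1 + lam • hg.Dtot s) * Y s - B s +
        lam • ∑ s' : hg.S, ∑ t : hg.T s s',
          (hg.Dst t * Y s * (hg.H t * (hg.H t)ᵀ) -
            hg.A t * Y s' * ((hg.H t)ᵀ + hg.H (hg.einv t)))) * Xᵀ) := by
  have hfid : ∑ s0, ∑ i, ∑ k, (Y s0 i k - B s0 i k) * (Pi.single s X : hg.Emb) s0 i k =
      trace ((Y s - B s) * Xᵀ) := by
    rw [Fintype.sum_eq_single s fun s0 h => by simp [h], trace_mul_transpose_eq_sum]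
    simp
  have hout : ∑ s0, ∑ s', ∑ t : hg.T s0 s', ∑ i, ∑ j, hg.A t i j *
      ∑ k', ((Y s0 i ᵥ* hg.H t) k' - Y s' j k') * ((Pi.single s X : hg.Emb) s0 i ᵥ* hg.H t) k' =
      ∑ s', ∑ t : hg.T s s',
        trace ((hg.Dst t * Y s * (hg.H t * (hg.H t)ᵀ) - hg.A t * Y s' * (hg.H t)ᵀ) * Xᵀ) := by
    rw [Fintype.sum_eq_single s fun s0 h => by simp [h, ← mul_apply_eq_vecMul],
      ← sum_out_edges]
    simp
  have hin : ∑ s0, ∑ s', ∑ t : hg.T s0 s', ∑ i, ∑ j, hg.A t i j *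
      ∑ k', ((Y s0 i ᵥ* hg.H t) k' - Y s' j k') * (Pi.single s X : hg.Emb) s' j k' =
      ∑ s', ∑ t : hg.T s s',
        trace ((hg.A t * Y s' * hg.H (hg.einv t) - hg.Dst t * Y s) * Xᵀ) := by
    rw [sum_comm, Fintype.sum_eq_single s fun s1 h => by simp [h], ← sum_in_edges]
    simp
  simp only [energyDeriv, mul_sub, sum_sub_distrib, sum_add_distrib, ← mul_sum, hfid, hout, hin]
  simp only [Dtot, Matrix.add_mul, Matrix.sub_mul, Matrix.smul_mul, Matrix.one_mul, Matrix.sum_mul,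
    Matrix.mul_add, trace_add, trace_sub, trace_smul, trace_sum, smul_eq_mul, sum_add_distrib,
    sum_sub_distrib]
  ring

end Energy

end HeteroSetup

theorem stmt1_general (hg : HeteroSetup) (lam : ℝ) (B : hg.Emb)
    (Y : hg.Emb) (s : hg.S) :
    HasGradientAt
      (fun Z : EuclideanSpace ℝ (Fin (hg.n s) × Fin (hg.d s)) =>
        hg.energy lam B (Function.update Y s (Matrix.of fun i k => Z (i, k))))
      ((WithLp.equiv 2 _).symm fun p : Fin (hg.n s) × Fin (hg.d s) =>
        (((1 + lam • hg.Dtot s) * Y s - B s +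
          lam • ∑ s' : hg.S, ∑ t : hg.T s s',
            (hg.Dst t * Y s * (hg.H t * (hg.H t)ᵀ) -
              hg.A t * Y s' * ((hg.H t)ᵀ + hg.H (hg.einv t))) :
          Matrix (Fin (hg.n s)) (Fin (hg.d s)) ℝ) p.1 p.2))
      ((WithLp.equiv 2 _).symm fun p : Fin (hg.n s) × Fin (hg.d s) => Y s p.1 p.2) := by
  have hcont : Continuous fun V : EuclideanSpace ℝ (Fin (hg.n s) × Fin (hg.d s)) =>
      hg.energy lam 0 (Pi.single s (Matrix.of fun i k => V (i, k))) :=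
    (hg.continuous_energy lam 0).comp
      ((continuous_single s).comp (continuous_matrix fun i k => by fun_prop))
  refine hasGradientAt_of_eq_add_inner_add (fun V => ?_)
    (isBigO_norm_sq_of_continuousAt_of_smul hcont.continuousAt fun c V => ?_)
  · have hupd : Function.update Y s (Matrix.of fun i k =>
        (((WithLp.equiv 2 _).symm fun p : Fin (hg.n s) × Fin (hg.d s) => Y s p.1 p.2) + V)
          (i, k)) = Y + Pi.single s (Matrix.of fun i k => V (i, k)) := by
      ext s0 i k
      rcases eq_or_ne s0 s with rfl | h
      · simp
      · simp [h]
    have hx : Function.update Y s (Matrix.of fun i k =>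
        ((WithLp.equiv 2 _).symm fun p : Fin (hg.n s) × Fin (hg.d s) => Y s p.1 p.2) (i, k)) = Y :=
      Function.update_eq_self_iff.mpr rfl
    rw [hupd, hx, hg.energy_add, hg.energyDeriv_single, inner_toLp_eq_trace]
  · rw [← energy_zero_smul, ← Pi.single_smul]
    congr

/-- In the heterogeneous setup with λ > 0, for every `Y = (Y_s)` and
every node type `s`, the gradient of the heterogeneous energy ℓ with respect to `Y_s` is
`∇_{Y_s} ℓ(Y) = (I + λ D_s) Y_s − B_s
  + λ Σ_{s'∈S} Σ_{t∈T_{ss'}} ( D_{st} Y_s (H_t H_tᵀ) − A_t Y_{s'} (H_tᵀ + H_{t_inv}) )`.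
The gradient statement is expressed via `HasGradientAt` on the Euclidean (Frobenius
inner product) space of matrices `ℝ^{n_s × d_s} ≃ EuclideanSpace ℝ (Fin n_s × Fin d_s)`,
for the function `Z ↦ ℓ(Y with its s-component replaced by Z)`. -/
theorem stmt1 (hg : HeteroSetup) (lam : ℝ) (hlam : 0 < lam) (B : hg.Emb)
    (Y : hg.Emb) (s : hg.S) :
    HasGradientAt
      (fun Z : EuclideanSpace ℝ (Fin (hg.n s) × Fin (hg.d s)) =>
        hg.energy lam B (Function.update Y s (Matrix.of fun i k => Z (i, k))))
      ((WithLp.equiv 2 _).symm fun p : Fin (hg.n s) × Fin (hg.d s) =>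
        (((1 + lam • hg.Dtot s) * Y s - B s +
          lam • ∑ s' : hg.S, ∑ t : hg.T s s',
            (hg.Dst t * Y s * (hg.H t * (hg.H t)ᵀ) -
              hg.A t * Y s' * ((hg.H t)ᵀ + hg.H (hg.einv t))) :
          Matrix (Fin (hg.n s)) (Fin (hg.d s)) ℝ) p.1 p.2))
      ((WithLp.equiv 2 _).symm fun p : Fin (hg.n s) × Fin (hg.d s) => Y s p.1 p.2) :=
  stmt1_general hg lam B Y s
end

section
/- Let n ≥ 1, λ > 0, let D ∈ ℝ^{n×n} be a diagonal matrix with nonnegative diagonal entries whose minimum diagonal entry is d_min, and let S ∈ ℝ^{n×n} be symmetric with largest eigenvalue σ_max ≥ 0 such that S + D is positive semidefinite. Fix b ∈ ℝⁿ and define f(y) = (1/2) yᵀ (I + λ(S + D)) y − bᵀ y. For any initialization y^{(0)} ∈ ℝⁿ, define y^{(k+1)} = y^{(k)} − α (I + λD)^{-1} ((I + λ(S + D)) y^{(k)} − b). If 0 < α < (2 + 2λ d_min) / (1 + λ(d_min + σ_max)), then f(y^{(k+1)}) ≤ f(y^{(k)}) for all k, and y^{(k)} converges as k → ∞ to (I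 + λ(S + D))^{-1} b, the unique global minimizer of f. -/
/-!
Write `A = 1 + λ(S + D)`, `M = 1 + λD`, `x⋆ = A⁻¹ b` and `e = y - x⋆`. Then
`f y = f x⋆ + ½ eᵀAe`, and one step is `e ↦ e - α u` with `M u = A e`, so
`V(e - α u) = V(e) - 2α uᵀMu + α² uᵀAu` for the energy `V(e) = eᵀAe`.
Since `uᵀSu ≤ σ_max |u|² ≤ σ_max uᵀMu / (1 + λ d_min)`, we get `uᵀAu ≤ c uᵀMu` with
`c = (1 + λ(d_min + σ_max)) / (1 + λ d_min)`, and the bound on `α` says exactly `α c < 2`.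
Hence the energy drops by at least `α (2 - α c) uᵀMu ≥ 0` per step; the drops are summable,
so `u_k → 0`, and `e_k = A⁻¹ M u_k → 0`.
-/

open Matrix Filter Topology

lemma summable_of_le_sub_mul {a q : ℕ → ℝ} {ε : ℝ} (ha : ∀ k, 0 ≤ a k) (hq : ∀ k, 0 ≤ q k)
    (hε : 0 < ε) (h : ∀ k, a (k + 1) ≤ a k - ε * q k) : Summable q := by
  refine summable_of_sum_range_le hq (c := a 0 / ε) fun N => ?_
  have htelescope : ε * ∑ k ∈ Finset.range N, q k ≤ a 0 - a N := by
    induction N with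
    | zero => simp
    | succ N ih => rw [Finset.sum_range_succ, mul_add]; linarith [h N]
  rw [le_div_iff₀' hε]
  linarith [ha N]

lemma tendsto_zero_of_tendsto_dotProduct_self {ι β : Type*} [Fintype ι] {l : Filter β}
    {v : β → ι → ℝ} (h : Tendsto (fun k => v k ⬝ᵥ v k) l (𝓝 0)) : Tendsto v l (𝓝 0) := by
  refine tendsto_pi_nhds.mpr fun i => squeeze_zero_norm (fun k => Real.abs_le_sqrt ?_)
    (by simpa [Function.comp_def] using (Real.continuous_sqrt.tendsto 0).comp h)
  rw [sq]
  exact Finset.single_le_sum (f := fun j => v k j * v k j) (fun j _ => mul_self_nonneg _)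
    (Finset.mem_univ i)

namespace Matrix

variable {ι : Type*} [Fintype ι]

lemma dotProduct_add_smul_mulVec_le {M S : Matrix ι ι ℝ} {t σ m : ℝ} (ht : 0 ≤ t) (hσ0 : 0 ≤ σ)
    (hS : ∀ u, u ⬝ᵥ S *ᵥ u ≤ σ * (u ⬝ᵥ u)) (hm : 0 < m) (hM : ∀ u, m * (u ⬝ᵥ u) ≤ u ⬝ᵥ M *ᵥ u)
    (u : ι → ℝ) : u ⬝ᵥ (M + t • S) *ᵥ u ≤ (m + t * σ) / m * (u ⬝ᵥ M *ᵥ u) := by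
  have hu : u ⬝ᵥ u ≤ (u ⬝ᵥ M *ᵥ u) / m := (le_div_iff₀' hm).mpr (hM u)
  calc u ⬝ᵥ (M + t • S) *ᵥ u = u ⬝ᵥ M *ᵥ u + t * (u ⬝ᵥ S *ᵥ u) := by
        rw [add_mulVec, smul_mulVec, dotProduct_add, dotProduct_smul, smul_eq_mul]
    _ ≤ u ⬝ᵥ M *ᵥ u + t * σ * ((u ⬝ᵥ M *ᵥ u) / m) := by
        rw [mul_assoc]
        gcongr
        exact (hS u).trans (mul_le_mul_of_nonneg_left hu hσ0)
    _ = (m + t * σ) / m * (u ⬝ᵥ M *ᵥ u) := by field_simp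

lemma dotProduct_mulVec_sub_smul {A : Matrix ι ι ℝ} (hA : A.IsSymm) (v w : ι → ℝ) (α : ℝ) :
    (v - α • w) ⬝ᵥ A *ᵥ (v - α • w) =
      v ⬝ᵥ A *ᵥ v - 2 * α * (A *ᵥ v ⬝ᵥ w) + α ^ 2 * (w ⬝ᵥ A *ᵥ w) := by
  have hsymm : v ⬝ᵥ A *ᵥ w = A *ᵥ v ⬝ᵥ w := by
    rw [dotProduct_mulVec, ← mulVec_transpose, hA.eq]
  simp only [mulVec_sub, mulVec_smul, sub_dotProduct, dotProduct_sub, smul_dotProduct,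
    dotProduct_smul, smul_eq_mul, hsymm, dotProduct_comm w (A *ᵥ v)]
  ring

lemma dotProduct_mulVec_sub_smul_le {A M : Matrix ι ι ℝ} (hA : A.IsSymm) {c : ℝ}
    (hc : ∀ u, u ⬝ᵥ A *ᵥ u ≤ c * (u ⬝ᵥ M *ᵥ u)) {e u : ι → ℝ} (heu : A *ᵥ e = M *ᵥ u) (α : ℝ) :
    (e - α • u) ⬝ᵥ A *ᵥ (e - α • u) ≤ e ⬝ᵥ A *ᵥ e - α * (2 - α * c) * (u ⬝ᵥ M *ᵥ u) := by
  rw [dotProduct_mulVec_sub_smul hA, heu, dotProduct_comm (M *ᵥ u)]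
  nlinarith [mul_le_mul_of_nonneg_left (hc u) (sq_nonneg α)]

lemma half_dotProduct_mulVec_sub_dotProduct_eq {A : Matrix ι ι ℝ} (hA : A.IsSymm) {x b : ι → ℝ}
    (hx : A *ᵥ x = b) (z : ι → ℝ) :
    1 / 2 * (z ⬝ᵥ A *ᵥ z) - b ⬝ᵥ z =
      1 / 2 * ((z - x) ⬝ᵥ A *ᵥ (z - x)) + (1 / 2 * (x ⬝ᵥ A *ᵥ x) - b ⬝ᵥ x) := by
  subst hx
  have hsymm : x ⬝ᵥ A *ᵥ z = A *ᵥ x ⬝ᵥ z := by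
    rw [dotProduct_mulVec, ← mulVec_transpose, hA.eq]
  simp only [mulVec_sub, sub_dotProduct, dotProduct_sub, hsymm, dotProduct_comm z (A *ᵥ x),
    dotProduct_comm (A *ᵥ x) x]
  ring

lemma PosDef.half_dotProduct_mulVec_sub_dotProduct_lt {A : Matrix ι ι ℝ} (hA : A.PosDef)
    {x b : ι → ℝ} (hx : A *ᵥ x = b) {z : ι → ℝ} (hz : z ≠ x) :
    1 / 2 * (x ⬝ᵥ A *ᵥ x) - b ⬝ᵥ x < 1 / 2 * (z ⬝ᵥ A *ᵥ z) - b ⬝ᵥ z := by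
  have hpos := hA.dotProduct_mulVec_pos (sub_ne_zero.mpr hz)
  rw [star_trivial] at hpos
  rw [half_dotProduct_mulVec_sub_dotProduct_eq (isHermitian_iff_isSymm.mp hA.1) hx z]
  linarith

variable [DecidableEq ι]

lemma dotProduct_mulVec_le_of_forall_eigenvalue_le {S : Matrix ι ι ℝ} (hS : S.IsSymm) {σ : ℝ}
    (hσ : σ ∈ upperBounds {μ : ℝ | ∃ v : ι → ℝ, v ≠ 0 ∧ S *ᵥ v = μ • v}) (v : ι → ℝ) :
    v ⬝ᵥ S *ᵥ v ≤ σ * (v ⬝ᵥ v) := by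
  have hB : (σ • 1 - S).IsHermitian := isHermitian_iff_isSymm.mpr ((isSymm_one.smul σ).sub hS)
  have hBv w : (σ • 1 - S) *ᵥ w = σ • w - S *ᵥ w := by
    rw [sub_mulVec, smul_mulVec, one_mulVec]
  have hBpsd : (σ • 1 - S).PosSemidef := by
    refine hB.posSemidef_iff_eigenvalues_nonneg.mpr fun i => ?_
    set w := (hB.eigenvectorBasis i).ofLp
    have hw : w ≠ 0 := fun h =>
      hB.eigenvectorBasis.orthonormal.ne_zero i (by simpa [w] using congrArg (WithLp.toLp 2) h)
    have hSw : S *ᵥ w = (σ - hB.eigenvalues i) • w := by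
      have := hB.mulVec_eigenvectorBasis i
      rw [hBv] at this
      rw [sub_smul, ← this, sub_sub_cancel]
    simpa using hσ ⟨w, hw, hSw⟩
  have := hBpsd.dotProduct_mulVec_nonneg v
  rw [star_trivial, hBv, dotProduct_sub, dotProduct_smul, smul_eq_mul] at this
  linarith

lemma IsDiag.mul_dotProduct_self_le {D : Matrix ι ι ℝ} (hD : D.IsDiag) {d : ℝ}
    (hd : ∀ i, d ≤ D i i) (u : ι → ℝ) : d * (u ⬝ᵥ u) ≤ u ⬝ᵥ D *ᵥ u := by
  rw [← hD.diagonal_diag, dotProduct, dotProduct, Finset.mul_sum]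
  refine Finset.sum_le_sum fun i _ => ?_
  rw [mulVec_diagonal, diag_apply]
  nlinarith [mul_le_mul_of_nonneg_right (hd i) (mul_self_nonneg (u i))]

lemma IsDiag.mul_dotProduct_self_le_one_add_smul {D : Matrix ι ι ℝ} (hD : D.IsDiag) {d t : ℝ}
    (hd : ∀ i, d ≤ D i i) (ht : 0 ≤ t) (u : ι → ℝ) :
    (1 + t * d) * (u ⬝ᵥ u) ≤ u ⬝ᵥ (1 + t • D) *ᵥ u := by
  rw [add_mulVec, one_mulVec, smul_mulVec, dotProduct_add, dotProduct_smul, smul_eq_mul, add_mul,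
    one_mul, mul_assoc]
  gcongr
  exact hD.mul_dotProduct_self_le hd u

lemma isUnit_of_mul_dotProduct_self_le {M : Matrix ι ι ℝ} {m : ℝ} (hm : 0 < m)
    (hM : ∀ u, m * (u ⬝ᵥ u) ≤ u ⬝ᵥ M *ᵥ u) : IsUnit M := by
  refine mulVec_injective_iff_isUnit.mp fun v w hvw => sub_eq_zero.mp ?_
  have h := hM (v - w)
  rw [mulVec_sub, hvw, sub_self, dotProduct_zero] at h
  exact dotProduct_self_eq_zero.mp
    (le_antisymm (nonpos_of_mul_nonpos_right h hm) (dotProduct_self_star_nonneg _))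

theorem tendsto_zero_of_preconditioned_descent {A M : Matrix ι ι ℝ} (hA : A.PosDef) {m c α : ℝ}
    (hm : 0 < m) (hM : ∀ u, m * (u ⬝ᵥ u) ≤ u ⬝ᵥ M *ᵥ u)
    (hc : ∀ u, u ⬝ᵥ A *ᵥ u ≤ c * (u ⬝ᵥ M *ᵥ u)) (hα0 : 0 < α) (hαc : α * c < 2)
    {e : ℕ → ι → ℝ} (he : ∀ k, e (k + 1) = e k - α • (M⁻¹ *ᵥ A *ᵥ e k)) :
    (∀ k, e (k + 1) ⬝ᵥ A *ᵥ e (k + 1) ≤ e k ⬝ᵥ A *ᵥ e k) ∧ Tendsto e atTop (𝓝 0) := by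
  have hMunit : IsUnit M.det :=
    (isUnit_iff_isUnit_det M).mp (isUnit_of_mul_dotProduct_self_le hm hM)
  set u : ℕ → ι → ℝ := fun k => M⁻¹ *ᵥ A *ᵥ e k
  have heu k : A *ᵥ e k = M *ᵥ u k := by
    rw [mulVec_mulVec, mul_nonsing_inv _ hMunit, one_mulVec]
  have hq k : 0 ≤ u k ⬝ᵥ M *ᵥ u k :=
    (mul_nonneg hm.le (dotProduct_self_star_nonneg _)).trans (hM _)
  have hgain : 0 < α * (2 - α * c) := mul_pos hα0 (by linarith)
  have hstep k : e (k + 1) ⬝ᵥ A *ᵥ e (k + 1) ≤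
      e k ⬝ᵥ A *ᵥ e k - α * (2 - α * c) * (u k ⬝ᵥ M *ᵥ u k) :=
    he k ▸ dotProduct_mulVec_sub_smul_le (isHermitian_iff_isSymm.mp hA.1) hc (heu k) α
  refine ⟨fun k => by nlinarith [hstep k, hq k], ?_⟩
  have hsum := summable_of_le_sub_mul
    (fun k => by simpa using hA.posSemidef.dotProduct_mulVec_nonneg (e k)) hq hgain hstep
  have hu : Tendsto u atTop (𝓝 0) := by
    refine tendsto_zero_of_tendsto_dotProduct_self (squeeze_zero
      (fun k => dotProduct_self_star_nonneg _) (fun k => (le_div_iff₀' hm).mpr (hM (u k))) ?_)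
    simpa using hsum.tendsto_atTop_zero.div_const m
  have he_eq : e = fun k => (A⁻¹ * M) *ᵥ u k := funext fun k => by
    rw [← mulVec_mulVec, ← heu, mulVec_mulVec,
      nonsing_inv_mul _ ((isUnit_iff_isUnit_det A).mp hA.isUnit), one_mulVec]
  have hlim : Tendsto (fun k => (A⁻¹ * M) *ᵥ u k) atTop (𝓝 ((A⁻¹ * M) *ᵥ 0)) :=
    ((continuous_const.matrix_mulVec continuous_id).tendsto 0).comp hu
  rwa [mulVec_zero, ← he_eq] at hlim

end Matrix

theorem stmt5_general (n : ℕ) (lam : ℝ) (hlam : 0 < lam)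
    (D S : Matrix (Fin n) (Fin n) ℝ)
    (hDdiag : ∀ i j, i ≠ j → D i j = 0) (hDnonneg : ∀ i, 0 ≤ D i i)
    (dmin : ℝ) (hdmin : IsLeast (Set.range fun i => D i i) dmin)
    (hS : Sᵀ = S) (σmax : ℝ) (hσ0 : 0 ≤ σmax)
    (hσ : IsGreatest {μ : ℝ | ∃ v : Fin n → ℝ, v ≠ 0 ∧ S *ᵥ v = μ • v} σmax)
    (hSD : (S + D).PosSemidef)
    (b : Fin n → ℝ) (f : (Fin n → ℝ) → ℝ)
    (hf : ∀ y, f y = (1 / 2 : ℝ) * (y ⬝ᵥ ((1 + lam • (S + D)) *ᵥ y)) - b ⬝ᵥ y)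
    (α : ℝ) (hα0 : 0 < α)
    (hα : α < (2 + 2 * lam * dmin) / (1 + lam * (dmin + σmax)))
    (y : ℕ → (Fin n → ℝ))
    (hrec : ∀ k, y (k + 1) = y k - α • ((1 + lam • D)⁻¹ *ᵥ ((1 + lam • (S + D)) *ᵥ y k - b))) :
    (∀ k, f (y (k + 1)) ≤ f (y k)) ∧
    Tendsto y atTop (nhds ((1 + lam • (S + D))⁻¹ *ᵥ b)) ∧
    (∀ z, f ((1 + lam • (S + D))⁻¹ *ᵥ b) ≤ f z) ∧
    (∀ z, (∀ w, f z ≤ f w) → z = (1 + lam • (S + D))⁻¹ *ᵥ b) := by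
  set A : Matrix (Fin n) (Fin n) ℝ := 1 + lam • (S + D)
  set M : Matrix (Fin n) (Fin n) ℝ := 1 + lam • D
  set x := A⁻¹ *ᵥ b
  obtain ⟨i₀, hi₀⟩ := hdmin.1
  have hdmin0 : 0 ≤ dmin := by rw [← hi₀]; exact hDnonneg i₀
  have hm : 0 < 1 + lam * dmin := by positivity
  have hM : ∀ u, (1 + lam * dmin) * (u ⬝ᵥ u) ≤ u ⬝ᵥ M *ᵥ u :=
    IsDiag.mul_dotProduct_self_le_one_add_smul (fun i j h => hDdiag i j h)
      (fun i => hdmin.2 ⟨i, rfl⟩) hlam.le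
  have hc u : u ⬝ᵥ A *ᵥ u ≤ (1 + lam * dmin + lam * σmax) / (1 + lam * dmin) * (u ⬝ᵥ M *ᵥ u) := by
    rw [show A = M + lam • S by simp only [A, M, smul_add]; abel]
    exact dotProduct_add_smul_mulVec_le hlam.le hσ0
      (dotProduct_mulVec_le_of_forall_eigenvalue_le hS hσ.2) hm hM u
  have hαc : α * ((1 + lam * dmin + lam * σmax) / (1 + lam * dmin)) < 2 := by
    rw [lt_div_iff₀ (by positivity)] at hα
    rw [mul_div_assoc', div_lt_iff₀ hm]
    linarith
  have hA : A.PosDef := PosDef.one.add_posSemidef (hSD.smul hlam.le)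
  have hAx : A *ᵥ x = b := by
    rw [mulVec_mulVec, mul_nonsing_inv _ ((isUnit_iff_isUnit_det A).mp hA.isUnit), one_mulVec]
  have hfx z : f z = 1 / 2 * ((z - x) ⬝ᵥ A *ᵥ (z - x)) + f x := by
    rw [hf, hf, half_dotProduct_mulVec_sub_dotProduct_eq (isHermitian_iff_isSymm.mp hA.1) hAx]
  obtain ⟨hdesc, hlim⟩ := tendsto_zero_of_preconditioned_descent hA hm hM hc hα0 hαc
    (e := fun k => y k - x) fun k => by simp only [hrec k, mulVec_sub, hAx]; abel
  refine ⟨fun k => ?_, by simpa using hlim.add_const x, fun z => ?_, fun z hz => ?_⟩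
  · rw [hfx, hfx (y k)]
    linarith [hdesc k]
  · obtain rfl | hne := eq_or_ne z x
    · exact le_rfl
    · simpa only [hf] using (hA.half_dotProduct_mulVec_sub_dotProduct_lt hAx hne).le
  · by_contra hne
    have hlt := hA.half_dotProduct_mulVec_sub_dotProduct_lt hAx hne
    simp only [← hf] at hlt
    exact (hz x).not_gt hlt

/-- Let n ≥ 1, λ > 0, D ∈ ℝ^{n×n} diagonal with nonnegative diagonal
entries whose minimum diagonal entry is d_min, and S ∈ ℝ^{n×n} symmetric with largest
eigenvalue σ_max ≥ 0 such that S + D is positive semidefinite.  Fix b ∈ ℝⁿ and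
f(y) = (1/2) yᵀ (I + λ(S + D)) y − bᵀ y.  For any initialization y⁽⁰⁾, define
y⁽ᵏ⁺¹⁾ = y⁽ᵏ⁾ − α (I + λD)⁻¹ ((I + λ(S + D)) y⁽ᵏ⁾ − b).
If 0 < α < (2 + 2λ d_min) / (1 + λ(d_min + σ_max)), then f(y⁽ᵏ⁺¹⁾) ≤ f(y⁽ᵏ⁾) for all k,
and y⁽ᵏ⁾ converges to (I + λ(S + D))⁻¹ b, the unique global minimizer of f. -/
theorem stmt5 (n : ℕ) (hn : 1 ≤ n) (lam : ℝ) (hlam : 0 < lam)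
    (D S : Matrix (Fin n) (Fin n) ℝ)
    (hDdiag : ∀ i j, i ≠ j → D i j = 0) (hDnonneg : ∀ i, 0 ≤ D i i)
    (dmin : ℝ) (hdmin : IsLeast (Set.range fun i => D i i) dmin)
    (hS : Sᵀ = S) (σmax : ℝ) (hσ0 : 0 ≤ σmax)
    (hσ : IsGreatest {μ : ℝ | ∃ v : Fin n → ℝ, v ≠ 0 ∧ S *ᵥ v = μ • v} σmax)
    (hSD : (S + D).PosSemidef)
    (b : Fin n → ℝ) (f : (Fin n → ℝ) → ℝ)
    (hf : ∀ y, f y = (1 / 2 : ℝ) * (y ⬝ᵥ ((1 + lam • (S + D)) *ᵥ y)) - b ⬝ᵥ y)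
    (α : ℝ) (hα0 : 0 < α)
    (hα : α < (2 + 2 * lam * dmin) / (1 + lam * (dmin + σmax)))
    (y : ℕ → (Fin n → ℝ))
    (hrec : ∀ k, y (k + 1) = y k - α • ((1 + lam • D)⁻¹ *ᵥ ((1 + lam • (S + D)) *ᵥ y k - b))) :
    (∀ k, f (y (k + 1)) ≤ f (y k)) ∧
    Tendsto y atTop (nhds ((1 + lam • (S + D))⁻¹ *ᵥ b)) ∧
    (∀ z, f ((1 + lam • (S + D))⁻¹ *ᵥ b) ≤ f z) ∧
    (∀ z, (∀ w, f z ≤ f w) → z = (1 + lam • (S + D))⁻¹ *ᵥ b) :=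
  stmt5_general n lam hlam D S hDdiag hDnonneg dmin hdmin hS σmax hσ0 hσ hSD b f hf α hα0 hα y hrec
end
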